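/- arXiv:2502.05597 — 6 statements merged into one kernel-verified Lean document; each statement's English description precedes it below -/
import Mathlib

section
/- Suppose f and g are binary signatures (functions {0,1}² → ℂ) whose value matrices satisfy M_f · M_g = I (the 2×2 identity), where M_f = [[f(00), f(01)],[f(10), f(11)]] and similarly for g. Then f ∈ 𝒜 if and only if g ∈ 𝒜. -/
/-- `boolF2 b` is the element of `𝔽₂` corresponding to the Boolean value `b`. -/
def boolF2 (b : Bool) : ZMod 2 := if b then 1 else 0

/-- The class `𝒜` of affine signatures: `f` has the form
`λ · χ_{AX=0} · i^{L₁(X)+⋯+L_m(X)}`, where `X = (x₁,…,x_n,1)` over `𝔽₂`,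
`χ_{AX=0}` is the 0–1 indicator of an affine subspace (each row of `A X = 0`
is an affine equation `∑ᵢ A r i · xᵢ = b r`), and each `L_j(X) = ⟨α_j, X⟩`
is an `𝔽₂`-affine form `∑ᵢ α j i · xᵢ + c j ∈ {0,1}`, the exponent sum being
taken over `ℤ` (here over `ℕ`, via `ZMod.val`). -/
def InA {n : ℕ} (f : (Fin n → Bool) → ℂ) : Prop :=
  ∃ (lam : ℂ) (m t : ℕ) (A : Fin m → Fin n → ZMod 2) (b : Fin m → ZMod 2)
    (al : Fin t → Fin n → ZMod 2) (c : Fin t → ZMod 2),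
    ∀ x : Fin n → Bool,
      f x = lam * (if ∀ r, ∑ i, A r i * boolF2 (x i) = b r then 1 else 0) *
        Complex.I ^ (∑ j, ((∑ i, al j i * boolF2 (x i)) + c j).val)

/-- The value matrix `M_f = [[f(00), f(01)],[f(10), f(11)]]` of a binary
signature, with rows indexed by the first input and columns by the second. -/
def valMatrix (f : (Fin 2 → Bool) → ℂ) : Matrix Bool Bool ℂ :=
  Matrix.of fun a b => f ![a, b]

/-! A binary signature in `𝒜` whose value matrix is nonsingular is, up to a scalar factor,
`[[1, iᵖ], [i^q, -i^(p+q)]]`, `diag(1, iᵖ)` or `antidiag(1, iᵖ)`. Indeed its support is an affine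
subspace of `𝔽₂²`, so it is everything, a diagonal or an antidiagonal, and on the support the values
are `λ · i^E(x)` with `E` affine modulo 2, which forces `f(00) f(11) = ± f(01) f(10)`. The inverse of
such a matrix is the adjugate divided by the determinant, and it has the same shape. -/

open Complex Finset

section

variable {n : ℕ}

def xor3 (x y z : Fin n → Bool) : Fin n → Bool := fun i => xor (x i) (xor (y i) (z i))

lemma boolF2_xor (a b : Bool) : boolF2 (xor a b) = boolF2 a + boolF2 b := by
  cases a <;> cases b <;> decide

lemma sum_mul_boolF2_xor3 (u : Fin n → ZMod 2) (x y z : Fin n → Bool) :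
    ∑ i, u i * boolF2 (xor3 x y z i) =
      ∑ i, u i * boolF2 (x i) + ∑ i, u i * boolF2 (y i) + ∑ i, u i * boolF2 (z i) := by
  simp only [xor3, boolF2_xor, mul_add, sum_add_distrib, add_assoc]

lemma sum_mul_boolF2_xor3_add (u : Fin n → ZMod 2) (c : ZMod 2) (x y z : Fin n → Bool) :
    ∑ i, u i * boolF2 (xor3 x y z i) + c =
      (∑ i, u i * boolF2 (x i) + c) + (∑ i, u i * boolF2 (y i) + c) +
        (∑ i, u i * boolF2 (z i) + c) := by
  rw [sum_mul_boolF2_xor3]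
  linear_combination (-c) * CharTwo.two_eq_zero (R := ZMod 2)

namespace InA

variable {f g : (Fin n → Bool) → ℂ}

lemma apply_xor3_ne_zero (hf : InA f) {x y z : Fin n → Bool} (hx : f x ≠ 0) (hy : f y ≠ 0)
    (hz : f z ≠ 0) : f (xor3 x y z) ≠ 0 := by
  obtain ⟨lam, m, t, A, b, al, c, hval⟩ := hf
  have mem : ∀ w, f w ≠ 0 → ∀ r, ∑ i, A r i * boolF2 (w i) = b r := fun w hw => by
    by_contra h
    exact hw (by rw [hval, if_neg h, mul_zero, zero_mul])
  rw [hval] at hx ⊢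
  refine mul_ne_zero (mul_ne_zero (left_ne_zero_of_mul (left_ne_zero_of_mul hx)) ?_)
    (pow_ne_zero _ I_ne_zero)
  rw [if_pos fun r => ?_]
  · exact one_ne_zero
  rw [sum_mul_boolF2_xor3, mem x (by rwa [hval]) r, mem y hy r, mem z hz r]
  linear_combination (b r) * CharTwo.two_eq_zero (R := ZMod 2)

lemma exists_I_pow (hf : InA f) : ∃ (lam : ℂ) (E : (Fin n → Bool) → ℕ),
    (∀ x, f x ≠ 0 → f x = lam * I ^ E x) ∧
      ∀ x y z, E x + E (xor3 x y z) ≡ E y + E z [MOD 2] := by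
  obtain ⟨lam, m, t, A, b, al, c, hval⟩ := hf
  refine ⟨lam, fun x => ∑ j, ((∑ i, al j i * boolF2 (x i)) + c j).val, fun x hx => ?_,
    fun x y z => ?_⟩
  · rw [hval] at hx ⊢
    rw [if_pos (by by_contra h; exact hx (by rw [if_neg h, mul_zero, zero_mul])), mul_one]
  · rw [← ZMod.natCast_eq_natCast_iff]
    simp only [Nat.cast_add, Nat.cast_sum, ZMod.natCast_zmod_val, sum_mul_boolF2_xor3_add,
      ← sum_add_distrib]
    refine sum_congr rfl fun j _ => ?_
    linear_combination (∑ i, al j i * boolF2 (x i) + c j) * CharTwo.two_eq_zero (R := ZMod 2)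

lemma pow_four_eq (hf : InA f) {x y : Fin n → Bool} (hx : f x ≠ 0) (hy : f y ≠ 0) :
    f x ^ 4 = f y ^ 4 := by
  obtain ⟨lam, E, hval, -⟩ := hf.exists_I_pow
  have key : ∀ k : ℕ, (lam * I ^ k) ^ 4 = lam ^ 4 := fun k => by
    rw [mul_pow, ← pow_mul, mul_comm k, pow_mul, I_pow_four, one_pow, mul_one]
  rw [hval x hx, hval y hy, key, key]

lemma mul_apply_xor3_eq_or (hf : InA f) {x y z : Fin n → Bool} (hx : f x ≠ 0) (hy : f y ≠ 0)
    (hz : f z ≠ 0) :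
    f x * f (xor3 x y z) = f y * f z ∨ f x * f (xor3 x y z) = -(f y * f z) := by
  obtain ⟨lam, E, hval, hpar⟩ := hf.exists_I_pow
  have sq : ∀ k l : ℕ, (lam * I ^ k * (lam * I ^ l)) ^ 2 = lam ^ 4 * (-1) ^ ((k + l) % 2) := by
    intro k l
    rw [← neg_one_pow_eq_pow_mod_two, ← I_sq, ← pow_mul]
    ring
  rw [← sq_eq_sq_iff_eq_or_eq_neg, hval x hx, hval _ (hf.apply_xor3_ne_zero hx hy hz),
    hval y hy, hval z hz, sq, sq, hpar x y z]

lemma const (lam : ℂ) : InA fun _ : Fin n → Bool => lam :=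
  ⟨lam, 0, 0, finZeroElim, finZeroElim, finZeroElim, finZeroElim, fun _ => by simp⟩

lemma indicator (u : Fin n → ZMod 2) (b : ZMod 2) :
    InA fun x => if ∑ i, u i * boolF2 (x i) = b then 1 else 0 :=
  ⟨1, 1, 0, fun _ => u, fun _ => b, finZeroElim, finZeroElim, fun _ => by simp⟩

lemma I_pow_affine (u : Fin n → ZMod 2) (c : ZMod 2) :
    InA fun x => I ^ (∑ i, u i * boolF2 (x i) + c).val :=
  ⟨1, 0, 1, finZeroElim, finZeroElim, fun _ => u, fun _ => c, fun _ => by simp⟩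

lemma mul (hf : InA f) (hg : InA g) : InA fun x => f x * g x := by
  obtain ⟨l₁, m₁, t₁, A₁, b₁, al₁, c₁, hf⟩ := hf
  obtain ⟨l₂, m₂, t₂, A₂, b₂, al₂, c₂, hg⟩ := hg
  refine ⟨l₁ * l₂, m₁ + m₂, t₁ + t₂, Fin.append A₁ A₂, Fin.append b₁ b₂, Fin.append al₁ al₂,
    Fin.append c₁ c₂, fun x => ?_⟩
  simp only [hf, hg, Fin.forall_fin_add, Fin.sum_univ_add, Fin.append_left, Fin.append_right,
    ite_and, pow_add]
  split_ifs <;> ring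

lemma pow (hf : InA f) (k : ℕ) : InA fun x => f x ^ k := by
  induction k with
  | zero => simpa using const 1
  | succ k ih => simpa [pow_succ] using ih.mul hf

end InA

end

lemma exists_eq_mul_I_pow {a b : ℂ} (ha : a ≠ 0) (h : b ^ 4 = a ^ 4) :
    ∃ p : ℕ, b = a * I ^ p := by
  obtain ⟨p, -, hp⟩ := isPrimitiveRoot_I.eq_pow_of_pow_eq_one (ξ := b / a)
    (by rw [div_pow, h, div_self (pow_ne_zero 4 ha)])
  exact ⟨p, by rw [hp, mul_div_cancel₀ _ ha]⟩

lemma det_ne_zero_of_mul_eq_one {a b c d w x y z : ℂ} (e₁ : a * w + b * y = 1)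
    (e₂ : a * x + b * z = 0) (e₄ : c * x + d * z = 1) : a * d - b * c ≠ 0 :=
  left_ne_zero_of_mul_eq_one (b := w * z - x * y) <| by
    linear_combination (c * x + d * z) * e₁ + e₄ - (c * w + d * y) * e₂

/-- The shapes `(a, b, c, d) = (f 00, f 01, f 10, f 11)` of a binary `𝒜`-signature with
nonsingular value matrix: full support, diagonal, antidiagonal. -/
def AffineNonsingular (a b c d : ℂ) : Prop :=
  (a ≠ 0 ∧ b ^ 4 = a ^ 4 ∧ c ^ 4 = a ^ 4 ∧ d ^ 4 = a ^ 4 ∧ a * d = -(b * c)) ∨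
  (a ≠ 0 ∧ b = 0 ∧ c = 0 ∧ d ^ 4 = a ^ 4) ∨
  (b ≠ 0 ∧ a = 0 ∧ d = 0 ∧ c ^ 4 = b ^ 4)

namespace AffineNonsingular

variable {a b c d : ℂ}

lemma adjugate_smul (h : AffineNonsingular a b c d) {s : ℂ} (hs : s ≠ 0) :
    AffineNonsingular (s * d) (-(s * b)) (-(s * c)) (s * a) := by
  rcases h with ⟨ha, hb, hc, hd, hdet⟩ | ⟨ha, rfl, rfl, hd⟩ | ⟨hb, rfl, rfl, hc⟩
  · have hd0 : d ≠ 0 := fun h0 => pow_ne_zero 4 ha (by rw [← hd, h0, zero_pow four_ne_zero])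
    exact Or.inl ⟨mul_ne_zero hs hd0, by linear_combination s ^ 4 * (hb - hd),
      by linear_combination s ^ 4 * (hc - hd), by linear_combination -s ^ 4 * hd,
      by linear_combination s ^ 2 * hdet⟩
  · have hd0 : d ≠ 0 := fun h0 => pow_ne_zero 4 ha (by rw [← hd, h0, zero_pow four_ne_zero])
    exact Or.inr (Or.inl ⟨mul_ne_zero hs hd0, by ring, by ring,
      by linear_combination s ^ 4 * hd.symm⟩)
  · exact Or.inr (Or.inr ⟨by simpa using mul_ne_zero hs hb, by ring, by ring,
      by linear_combination s ^ 4 * hc⟩)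

lemma of_mul_eq_one {w x y z : ℂ} (h : AffineNonsingular a b c d)
    (e₁ : a * w + b * y = 1) (e₂ : a * x + b * z = 0) (e₃ : c * w + d * y = 0)
    (e₄ : c * x + d * z = 1) : AffineNonsingular w x y z := by
  have hdet₀ := det_ne_zero_of_mul_eq_one e₁ e₂ e₄
  convert h.adjugate_smul (inv_ne_zero hdet₀) using 1 <;>
    simp only [eq_inv_mul_iff_mul_eq₀ hdet₀, ← mul_neg, eq_neg_iff_add_eq_zero]
  · linear_combination d * e₁ - b * e₃
  · linear_combination d * e₂ - b * e₄
  · linear_combination a * e₃ - c * e₁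
  · linear_combination a * e₄ - c * e₂

end AffineNonsingular

lemma funext_fin_two {α β : Type*} {f g : (Fin 2 → α) → β} (h : ∀ a b, f ![a, b] = g ![a, b]) :
    f = g :=
  funext ((FinVec.forall_iff fun x => f x = g x).1 h)

lemma InA.affineNonsingular {f : (Fin 2 → Bool) → ℂ} (hf : InA f)
    (hdet : f ![false, false] * f ![true, true] - f ![false, true] * f ![true, false] ≠ 0) :
    AffineNonsingular (f ![false, false]) (f ![false, true]) (f ![true, false])
      (f ![true, true]) := by
  have full (ha : f ![false, false] ≠ 0) (hb : f ![false, true] ≠ 0)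
      (hc : f ![true, false] ≠ 0) : AffineNonsingular (f ![false, false]) (f ![false, true])
        (f ![true, false]) (f ![true, true]) := by
    have h₁₁ : xor3 ![false, false] ![false, true] ![true, false] = ![true, true] := by decide
    have hd := hf.apply_xor3_ne_zero ha hb hc
    have hsign := hf.mul_apply_xor3_eq_or ha hb hc
    rw [h₁₁] at hd hsign
    exact Or.inl ⟨ha, hf.pow_four_eq hb ha, hf.pow_four_eq hc ha, hf.pow_four_eq hd ha,
      hsign.resolve_left fun h => hdet (by rw [h, sub_self])⟩
  have : f ![false, false] * f ![true, true] ≠ 0 ∨ f ![false, true] * f ![true, false] ≠ 0 := by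
    by_contra! h
    exact hdet (by rw [h.1, h.2, sub_zero])
  rcases this with had | hbc
  · obtain ⟨ha, hd⟩ := mul_ne_zero_iff.1 had
    by_cases hb : f ![false, true] = 0
    · refine Or.inr (Or.inl ⟨ha, hb, ?_, hf.pow_four_eq hd ha⟩)
      by_contra hc
      have h₀₁ : xor3 ![false, false] ![true, true] ![true, false] = ![false, true] := by decide
      exact (h₀₁ ▸ hf.apply_xor3_ne_zero ha hd hc) hb
    · have h₁₀ : xor3 ![false, false] ![true, true] ![false, true] = ![true, false] := by decide
      exact full ha hb (h₁₀ ▸ hf.apply_xor3_ne_zero ha hd hb)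
  · obtain ⟨hb, hc⟩ := mul_ne_zero_iff.1 hbc
    by_cases ha : f ![false, false] = 0
    · refine Or.inr (Or.inr ⟨hb, ha, ?_, hf.pow_four_eq hc hb⟩)
      by_contra hd
      have h₀₀ : xor3 ![false, true] ![true, false] ![true, true] = ![false, false] := by decide
      exact (h₀₀ ▸ hf.apply_xor3_ne_zero hb hc hd) ha
    · exact full ha hb hc

lemma InA.of_affineNonsingular {f : (Fin 2 → Bool) → ℂ}
    (h : AffineNonsingular (f ![false, false]) (f ![false, true]) (f ![true, false])
      (f ![true, true])) : InA f := by
  rcases h with ⟨ha, hb, hc, -, hdet⟩ | ⟨ha, hb, hc, hd⟩ | ⟨hb, ha, hd, hc⟩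
  · obtain ⟨p, hp⟩ := exists_eq_mul_I_pow ha hb
    obtain ⟨q, hq⟩ := exists_eq_mul_I_pow ha hc
    -- `i ^ (3 (x₀ ⊕ x₁) + x₀ + x₁) = (-1) ^ (x₀ x₁)` produces the sign of `f 11`.
    have hg := (((InA.const (f ![false, false])).mul ((InA.I_pow_affine ![1, 1] 0).pow 3)).mul
      ((InA.I_pow_affine ![1, 0] 0).pow (q + 1))).mul ((InA.I_pow_affine ![0, 1] 0).pow (p + 1))
    convert hg using 1
    refine funext_fin_two fun x₀ x₁ => ?_
    cases x₀ <;> cases x₁ <;>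
      simp [boolF2, Fin.sum_univ_two, CharTwo.add_self_eq_zero, ZMod.val_one]
    · rw [hp, pow_succ]
      linear_combination f ![false, false] * I ^ p * I_sq
    · rw [hq, pow_succ]
      linear_combination f ![false, false] * I ^ q * I_sq
    · refine mul_left_cancel₀ ha ?_
      rw [hdet, hp, hq, pow_succ, pow_succ]
      linear_combination -f ![false, false] ^ 2 * I ^ p * I ^ q * I_sq
  · obtain ⟨p, hp⟩ := exists_eq_mul_I_pow ha hd
    have hg := ((InA.const (f ![false, false])).mul (InA.indicator ![1, 1] 0)).mul
      ((InA.I_pow_affine ![1, 0] 0).pow p)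
    convert hg using 1
    refine funext_fin_two fun x₀ x₁ => ?_
    cases x₀ <;> cases x₁ <;>
      simp [boolF2, Fin.sum_univ_two, CharTwo.add_self_eq_zero, ZMod.val_one]
    exacts [hb, hc, hp]
  · obtain ⟨p, hp⟩ := exists_eq_mul_I_pow hb hc
    have hg := ((InA.const (f ![false, true])).mul (InA.indicator ![1, 1] 1)).mul
      ((InA.I_pow_affine ![1, 0] 0).pow p)
    convert hg using 1
    refine funext_fin_two fun x₀ x₁ => ?_
    cases x₀ <;> cases x₁ <;>
      simp [boolF2, Fin.sum_univ_two, CharTwo.add_self_eq_zero, ZMod.val_one]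
    exacts [ha, hp, hd]

lemma InA.of_valMatrix_mul_eq_one {f g : (Fin 2 → Bool) → ℂ}
    (h : valMatrix f * valMatrix g = 1) (hf : InA f) : InA g := by
  have e := fun i j => congrFun (congrFun h i) j
  simp only [Matrix.mul_apply, Fintype.sum_bool, valMatrix, Matrix.of_apply, Matrix.one_apply,
    Bool.forall_bool, Bool.false_eq_true, Bool.true_eq_false, if_true, if_false] at e
  obtain ⟨⟨e₁, e₂⟩, e₃, e₄⟩ := e
  rw [add_comm] at e₁ e₂ e₃ e₄
  exact .of_affineNonsingular <| (hf.affineNonsingular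
    (det_ne_zero_of_mul_eq_one e₁ e₂ e₄)).of_mul_eq_one e₁ e₂ e₃ e₄

/-- if binary signatures `f, g` satisfy `M_f · M_g = I`, then
`f ∈ 𝒜 ↔ g ∈ 𝒜`. -/
theorem stmt1 (f g : (Fin 2 → Bool) → ℂ)
    (h : valMatrix f * valMatrix g = 1) : InA f ↔ InA g :=
  ⟨InA.of_valMatrix_mul_eq_one h, InA.of_valMatrix_mul_eq_one (mul_eq_one_comm.1 h)⟩
end

section
/- Suppose f and g are binary signatures (functions {0,1}² → ℂ) whose value matrices satisfy M_f · M_g = I (the 2×2 identity), where M_f = [[f(00), f(01)],[f(10), f(11)]] and similarly for g. Then f ∈ 𝒫 if and only if g ∈ 𝒫. -/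
/-!
A binary signature lies in `𝒫` exactly when its value matrix is diagonal, antidiagonal or
singular. Every factor has one of these three shapes and each shape is closed under entrywise
products; conversely a diagonal (antidiagonal) matrix is `=₂` (`≠₂`) times a unary signature,
and a singular one is a product of two unary signatures. If `M_f M_g = I` both matrices are
invertible, hence not singular, and the inverse of an invertible diagonal (antidiagonal)
`2 × 2` matrix is again diagonal (antidiagonal).
-/

/-- A factor on the variables of an arity-`n` signature: either a unary
signature applied to one variable, the binary equality `=₂` applied to a pair
of (not necessarily distinct) variables, or the binary disequality `≠₂`
applied to such a pair. -/
def IsFactor {n : ℕ} (h : (Fin n → Bool) → ℂ) : Prop :=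
  (∃ (i : Fin n) (u : Bool → ℂ), ∀ x, h x = u (x i)) ∨
  (∃ i j : Fin n, ∀ x, h x = if x i = x j then 1 else 0) ∨
  (∃ i j : Fin n, ∀ x, h x = if x i = x j then 0 else 1)

/-- The class `𝒫` of product-type signatures: `f ∈ 𝒫` iff `f` is a (pointwise)
product of finitely many factors, each of which is a unary signature, `=₂`, or
`≠₂`, applied to not necessarily disjoint subsets of the variables. -/
def InP {n : ℕ} (f : (Fin n → Bool) → ℂ) : Prop :=
  ∃ (t : ℕ) (hs : Fin t → (Fin n → Bool) → ℂ),
    (∀ j, IsFactor (hs j)) ∧ ∀ x, f x = ∏ j, hs j x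

namespace Matrix

variable {R : Type*}

theorem det_bool [CommRing R] (A : Matrix Bool Bool R) :
    A.det = A false false * A true true - A false true * A true false := by
  rw [← det_reindex_self finTwoEquiv.symm A, det_fin_two]
  rfl

def IsAntidiag [Zero R] (A : Matrix Bool Bool R) : Prop :=
  ∀ b, A b b = 0

def IsProductType [CommRing R] (A : Matrix Bool Bool R) : Prop :=
  A.IsDiag ∨ A.IsAntidiag ∨ A.det = 0

theorem IsDiag.hadamard_left [MulZeroClass R] {A : Matrix Bool Bool R} (hA : A.IsDiag)
    (B : Matrix Bool Bool R) : (A ⊙ B).IsDiag :=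
  fun i j hij => by simp only [hadamard_apply, hA hij, zero_mul]

theorem IsAntidiag.hadamard_left [MulZeroClass R] {A : Matrix Bool Bool R} (hA : A.IsAntidiag)
    (B : Matrix Bool Bool R) : (A ⊙ B).IsAntidiag :=
  fun b => by rw [hadamard_apply, hA b, zero_mul]

theorem det_hadamard_eq_zero [CommRing R] {A B : Matrix Bool Bool R} (hA : A.det = 0)
    (hB : B.det = 0) : (A ⊙ B).det = 0 := by
  rw [det_bool] at *
  simp only [hadamard_apply]
  linear_combination (B false false * B true true) * hA + (A false true * A true false) * hB

theorem IsProductType.hadamard [CommRing R] {A B : Matrix Bool Bool R} (hA : A.IsProductType)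
    (hB : B.IsProductType) : (A ⊙ B).IsProductType := by
  rcases hA with hA | hA | hA
  · exact .inl (hA.hadamard_left B)
  · exact .inr (.inl (hA.hadamard_left B))
  rcases hB with hB | hB | hB
  · exact .inl (hadamard_comm A B ▸ hB.hadamard_left A)
  · exact .inr (.inl (hadamard_comm A B ▸ hB.hadamard_left A))
  · exact .inr (.inr (det_hadamard_eq_zero hA hB))

/-- Row `i` of `A` is supported in column `k`, so `A i k * B k j = δ i j` and `A i k` is a unit. -/
theorem apply_eq_zero_of_mul_eq_one [CommSemiring R] {A B : Matrix Bool Bool R} (hAB : A * B = 1)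
    {i k j : Bool} (hk : A i (!k) = 0) (hj : i ≠ j) : B k j = 0 := by
  have e : ∀ j, A i k * B k j = (1 : Matrix Bool Bool R) i j := fun j => by
    rw [← hAB, mul_apply, Fintype.sum_bool]
    cases k <;> simp only [Bool.not_false, Bool.not_true] at hk <;> simp [hk]
  exact (IsUnit.of_mul_eq_one _ ((e i).trans (one_apply_eq i))).mul_right_eq_zero.mp
    ((e j).trans (one_apply_ne hj))

theorem IsDiag.of_mul_eq_one [CommSemiring R] {A B : Matrix Bool Bool R} (hAB : A * B = 1)
    (hA : A.IsDiag) : B.IsDiag :=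
  fun i _ hij => apply_eq_zero_of_mul_eq_one hAB (hA (Bool.not_ne_self i).symm) hij

theorem IsAntidiag.of_mul_eq_one [CommSemiring R] {A B : Matrix Bool Bool R} (hAB : A * B = 1)
    (hA : A.IsAntidiag) : B.IsAntidiag :=
  fun b => apply_eq_zero_of_mul_eq_one hAB (hA !b) (Bool.not_ne_self b)

theorem IsProductType.of_mul_eq_one [CommRing R] [Nontrivial R] {A B : Matrix Bool Bool R}
    (hAB : A * B = 1) (hA : A.IsProductType) : B.IsProductType := by
  rcases hA with hA | hA | hA
  · exact .inl (hA.of_mul_eq_one hAB)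
  · exact .inr (.inl (hA.of_mul_eq_one hAB))
  · exact absurd hA (det_ne_zero_of_right_inverse hAB)

theorem exists_eq_vecMulVec_of_det_eq_zero {K : Type*} [Field K] {A : Matrix Bool Bool K}
    (hA : A.det = 0) : ∃ u v : Bool → K, A = vecMulVec u v := by
  rw [det_bool] at hA
  by_cases hrow : ∀ j, A false j = 0
  · refine ⟨fun i => if i then 1 else 0, A true, ?_⟩
    ext (_ | _) j <;> simp [vecMulVec_apply, hrow]
  · push Not at hrow
    obtain ⟨k, hk⟩ := hrow
    refine ⟨fun i => A i k / A false k, A false, ?_⟩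
    ext (_ | _) j
    · simp [vecMulVec_apply, hk]
    · have cross : A true k * A false j = A true j * A false k := by
        cases k <;> cases j
        · ring
        · linear_combination -hA
        · linear_combination hA
        · ring
      rw [vecMulVec_apply, div_mul_eq_mul_div, eq_div_iff hk, cross]

end Matrix

open Matrix

theorem valMatrix_injective : Function.Injective valMatrix := by
  intro f g h
  funext x
  have hx : x = ![x 0, x 1] := by ext i; fin_cases i <;> rfl
  rw [hx]
  exact congrFun (congrFun h (x 0)) (x 1)

theorem valMatrix_mul (f g : (Fin 2 → Bool) → ℂ) :
    valMatrix (f * g) = valMatrix f ⊙ valMatrix g :=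
  rfl

theorem isProductType_valMatrix_one : (valMatrix 1).IsProductType :=
  .inr (.inr (by simp [det_bool, valMatrix]))

theorem vecTwo_apply_eq_apply_iff {α : Type*} {i j : Fin 2} (hij : i ≠ j) (a b : α) :
    ![a, b] i = ![a, b] j ↔ a = b := by
  fin_cases i <;> fin_cases j <;> simp_all [eq_comm]

theorem IsFactor.isProductType_valMatrix {h : (Fin 2 → Bool) → ℂ} (hh : IsFactor h) :
    (valMatrix h).IsProductType := by
  rcases hh with ⟨i, u, hu⟩ | ⟨i, j, hij⟩ | ⟨i, j, hij⟩
  · refine .inr (.inr ?_)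
    rw [det_bool]
    fin_cases i <;> simp [valMatrix, hu, mul_comm]
  · obtain rfl | hne := eq_or_ne i j
    · exact .inr (.inr (by simp [det_bool, valMatrix, hij]))
    · exact .inl fun a b hab => by simp [valMatrix, hij, vecTwo_apply_eq_apply_iff hne, hab]
  · obtain rfl | hne := eq_or_ne i j
    · exact .inr (.inl fun b => by simp [valMatrix, hij])
    · exact .inr (.inl fun b => by simp [valMatrix, hij, vecTwo_apply_eq_apply_iff hne])

theorem InP.isProductType_valMatrix {f : (Fin 2 → Bool) → ℂ} (hf : InP f) :
    (valMatrix f).IsProductType := by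
  obtain ⟨t, hs, hfac, hprod⟩ := hf
  obtain rfl : f = ∏ j, hs j := funext fun x => by rw [hprod, Finset.prod_apply]
  exact Finset.prod_induction _ (fun f => (valMatrix f).IsProductType)
    (fun _ _ hf hg => valMatrix_mul _ _ ▸ hf.hadamard hg) isProductType_valMatrix_one
    fun j _ => (hfac j).isProductType_valMatrix

theorem InP.of_isFactor {n : ℕ} {h : (Fin n → Bool) → ℂ} (hh : IsFactor h) : InP h :=
  ⟨1, fun _ => h, fun _ => hh, fun x => by simp⟩

theorem InP.mul {n : ℕ} {f g : (Fin n → Bool) → ℂ} (hf : InP f) (hg : InP g) :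
    InP (f * g) := by
  obtain ⟨s, φ, hφ, hf⟩ := hf
  obtain ⟨t, ψ, hψ, hg⟩ := hg
  refine ⟨s + t, Fin.append φ ψ, fun j => ?_, fun x => ?_⟩
  · refine Fin.addCases (fun i => ?_) (fun i => ?_) j <;> simp [hφ, hψ]
  · simp [Fin.prod_univ_add, hf, hg]

theorem InP.of_isProductType_valMatrix {f : (Fin 2 → Bool) → ℂ}
    (hf : (valMatrix f).IsProductType) : InP f := by
  rcases hf with hf | hf | hf
  · have hft : f ![false, true] = 0 := hf (by decide)
    have htf : f ![true, false] = 0 := hf (by decide)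
    have : f = (fun x => if x 0 = x 1 then 1 else 0) * fun x => f ![x 0, x 0] :=
      valMatrix_injective <| by ext (_ | _) (_ | _) <;> simp [valMatrix, hft, htf]
    rw [this]
    exact (of_isFactor (.inr (.inl ⟨0, 1, fun _ => rfl⟩))).mul
      (of_isFactor (.inl ⟨0, fun s => f ![s, s], fun _ => rfl⟩))
  · have hff : f ![false, false] = 0 := hf false
    have htt : f ![true, true] = 0 := hf true
    have : f = (fun x => if x 0 = x 1 then 0 else 1) * fun x => f ![x 0, !x 0] :=
      valMatrix_injective <| by ext (_ | _) (_ | _) <;> simp [valMatrix, hff, htt]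
    rw [this]
    exact (of_isFactor (.inr (.inr ⟨0, 1, fun _ => rfl⟩))).mul
      (of_isFactor (.inl ⟨0, fun s => f ![s, !s], fun _ => rfl⟩))
  · obtain ⟨u, v, huv⟩ := exists_eq_vecMulVec_of_det_eq_zero hf
    have : f = (fun x => u (x 0)) * fun x => v (x 1) := valMatrix_injective huv
    rw [this]
    exact (of_isFactor (.inl ⟨0, u, fun _ => rfl⟩)).mul
      (of_isFactor (.inl ⟨1, v, fun _ => rfl⟩))

theorem inP_iff_isProductType_valMatrix (f : (Fin 2 → Bool) → ℂ) :
    InP f ↔ (valMatrix f).IsProductType :=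
  ⟨InP.isProductType_valMatrix, InP.of_isProductType_valMatrix⟩

/-- if binary signatures `f, g` satisfy `M_f · M_g = I`, then
`f ∈ 𝒫 ↔ g ∈ 𝒫`. -/
theorem stmt2 (f g : (Fin 2 → Bool) → ℂ)
    (h : valMatrix f * valMatrix g = 1) : InP f ↔ InP g := by
  rw [inP_iff_isProductType_valMatrix, inP_iff_isProductType_valMatrix]
  exact ⟨.of_mul_eq_one h, .of_mul_eq_one (mul_eq_one_comm.mp h)⟩
end

section
/- Let f be a signature of arity n and α ∈ supp(f). If #0(α) − #1(α) = k > 0, then there exists a signature g of arity k, obtained from f by a sequence of ≠₂-self-loops, such that g(0^k) ≠ 0, where 0^k is the all-zero string. Symmetrically, if #1(α) − #0(α) = k > 0, then there exists a signature g of arity k, obtained from f by a sequence of ≠₂-self-loops, such that g(1^k) ≠ 0, where 1^k is the all-one string. -/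
/-- Number of `1`s (Hamming weight) of a Boolean string. -/
def wt1 {n : ℕ} (x : Fin n → Bool) : ℕ := (Finset.univ.filter fun i => x i = true).card

/-- Number of `0`s of a Boolean string. -/
def wt0 {n : ℕ} (x : Fin n → Bool) : ℕ := (Finset.univ.filter fun i => x i = false).card

/-- The `≠₂`-self-loop of a signature `f` of arity `n+2`, connecting the
variable at position `i` with the variable at position `j` among the remaining
ones: `x ↦ f(x with xᵢ=0, xⱼ=1) + f(x with xᵢ=1, xⱼ=0)`. -/
noncomputable def selfLoop {n : ℕ} (f : (Fin (n + 2) → Bool) → ℂ)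
    (i : Fin (n + 2)) (j : Fin (n + 1)) : (Fin n → Bool) → ℂ :=
  fun x => f (i.insertNth false (j.insertNth true x)) +
    f (i.insertNth true (j.insertNth false x))

/-- `LoopReach n f m g` : the arity-`m` signature `g` is obtained from the
arity-`n` signature `f` by a finite (possibly empty) sequence of
`≠₂`-self-loops. -/
inductive LoopReach : (n : ℕ) → ((Fin n → Bool) → ℂ) → (m : ℕ) → ((Fin m → Bool) → ℂ) → Prop
  | refl (n : ℕ) (f : (Fin n → Bool) → ℂ) : LoopReach n f n f
  | step {n : ℕ} {f : (Fin n → Bool) → ℂ} {m : ℕ} {g : (Fin (m + 2) → Bool) → ℂ}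
      (h : LoopReach n f (m + 2) g) (i : Fin (m + 2)) (j : Fin (m + 1)) :
      LoopReach n f m (selfLoop g i j)

/-!
If every self-loop of `f` vanishes on the strings `γ` with `#0(γ) - #1(γ) = k`, then
`f(β ∘ (p q)) = -f(β)` for every `β` of that imbalance with `β p = 1` and `β q = 0`: the
self-loop at `(p, q)`, evaluated at the remaining coordinates of `β`, is `f(β ∘ (p q)) + f(β)`.
If `α` has a `1` at `p` and `0`s at `q ≠ r`, then `α ∘ (p r)` is reached from `α` both by one
such transposition and by two (`(p q)`, then `(q r)`), so `f α = -f α`. Hence if `f α ≠ 0` and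
`α` contains a `1`, some self-loop of `f` is nonzero at a string of the same imbalance; induction
on the arity ends at a string without `1`s, that is `0^k`. Complementing all inputs exchanges
the two halves of the statement.
-/

open Equiv

section Weights

variable {n : ℕ}

lemma wt1_eq_sum (x : Fin n → Bool) : wt1 x = ∑ i, (x i).toNat := by
  rw [wt1, Finset.card_filter]
  exact Finset.sum_congr rfl fun i _ => by cases x i <;> rfl

lemma wt0_eq_sum (x : Fin n → Bool) : wt0 x = ∑ i, (!x i).toNat := by
  rw [wt0, Finset.card_filter]
  exact Finset.sum_congr rfl fun i _ => by cases x i <;> rfl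

@[simp]
lemma wt1_insertNth (p : Fin (n + 1)) (b : Bool) (x : Fin n → Bool) :
    wt1 (p.insertNth b x) = b.toNat + wt1 x := by
  simp [wt1_eq_sum, Fin.sum_univ_succAbove _ p]

@[simp]
lemma wt0_insertNth (p : Fin (n + 1)) (b : Bool) (x : Fin n → Bool) :
    wt0 (p.insertNth b x) = (!b).toNat + wt0 x := by
  simp [wt0_eq_sum, Fin.sum_univ_succAbove _ p]

lemma wt0_add_wt1 (x : Fin n → Bool) : wt0 x + wt1 x = n := by
  rw [wt0_eq_sum, wt1_eq_sum, ← Finset.sum_add_distrib]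
  simp [fun i => show (!x i).toNat + (x i).toNat = 1 by cases x i <;> rfl]

lemma wt1_eq_zero_iff {x : Fin n → Bool} : wt1 x = 0 ↔ x = fun _ => false := by
  simp [wt1, Finset.filter_eq_empty_iff, funext_iff]

lemma wt1_comp_perm (x : Fin n → Bool) (σ : Perm (Fin n)) : wt1 (x ∘ σ) = wt1 x := by
  simp only [wt1_eq_sum, Function.comp_apply, Equiv.sum_comp σ (fun i => (x i).toNat)]

lemma wt0_comp_perm (x : Fin n → Bool) (σ : Perm (Fin n)) : wt0 (x ∘ σ) = wt0 x := by
  simp only [wt0_eq_sum, Function.comp_apply, Equiv.sum_comp σ (fun i => (!x i).toNat)]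

@[simp]
lemma wt0_not_comp (x : Fin n → Bool) : wt0 (not ∘ x) = wt1 x := by
  simp [wt0, wt1]

@[simp]
lemma wt1_not_comp (x : Fin n → Bool) : wt1 (not ∘ x) = wt0 x := by
  simp [wt0, wt1]

end Weights

lemma Fin.comp_insertNth {n : ℕ} {α β : Type*} (g : α → β) (p : Fin (n + 1)) (a : α)
    (x : Fin n → α) : g ∘ p.insertNth a x = p.insertNth (g a) (g ∘ x) :=
  Fin.eq_insertNth_iff.2 ⟨by simp, by ext; simp [Fin.removeNth]⟩

lemma comp_swap_succAbove_eq_insertNth {m : ℕ} {α : Type*} (β : Fin (m + 2) → α)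
    (p : Fin (m + 2)) (j : Fin (m + 1)) :
    β ∘ swap p (p.succAbove j) =
      p.insertNth (β (p.succAbove j)) (j.insertNth (β p) (j.removeNth (p.removeNth β))) := by
  refine Fin.eq_insertNth_iff.2 ⟨by simp, Fin.eq_insertNth_iff.2 ⟨by simp [Fin.removeNth], ?_⟩⟩
  ext z
  have hp : p.succAbove (j.succAbove z) ≠ p := Fin.succAbove_ne _ _
  have hq : p.succAbove (j.succAbove z) ≠ p.succAbove j :=
    (Fin.succAbove_right_injective (p := p)).ne (Fin.succAbove_ne _ _)
  simp [Fin.removeNth, swap_apply_of_ne_of_ne hp hq]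

lemma eq_insertNth_insertNth_removeNth {m : ℕ} {α : Type*} (β : Fin (m + 2) → α)
    (p : Fin (m + 2)) (j : Fin (m + 1)) :
    β = p.insertNth (β p) (j.insertNth (β (p.succAbove j)) (j.removeNth (p.removeNth β))) :=
  Fin.eq_insertNth_iff.2 ⟨rfl, Fin.eq_insertNth_iff.2 ⟨rfl, rfl⟩⟩

lemma selfLoop_apply_removeNth {m : ℕ} (f : (Fin (m + 2) → Bool) → ℂ) (β : Fin (m + 2) → Bool)
    (p : Fin (m + 2)) (j : Fin (m + 1)) (hp : β p = true) (hq : β (p.succAbove j) = false) :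
    selfLoop f p j (j.removeNth (p.removeNth β)) = f (β ∘ swap p (p.succAbove j)) + f β := by
  conv_rhs => rw [comp_swap_succAbove_eq_insertNth, eq_insertNth_insertNth_removeNth β p j]
  simp [selfLoop, hp, hq]

section Antisymmetry

variable {m k : ℕ} {f : (Fin (m + 2) → Bool) → ℂ}
  (hf : ∀ i j γ, wt0 γ = wt1 γ + k → selfLoop f i j γ = 0)
include hf

lemma apply_comp_swap_eq_neg {β : Fin (m + 2) → Bool} (hβ : wt0 β = wt1 β + k)
    {p q : Fin (m + 2)} (hpq : p ≠ q) (hp : β p = true) (hq : β q = false) :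
    f (β ∘ swap p q) = -f β := by
  obtain ⟨j, rfl⟩ := Fin.exists_succAbove_eq hpq.symm
  set γ := j.removeNth (p.removeNth β)
  have hγ : wt0 γ = wt1 γ + k := by
    have hβγ : β = p.insertNth true (j.insertNth false γ) := by
      rw [← hp, ← hq]
      exact eq_insertNth_insertNth_removeNth β p j
    rw [hβγ] at hβ
    simp only [wt0_insertNth, wt1_insertNth, Bool.not_true, Bool.not_false, Bool.toNat_true,
      Bool.toNat_false] at hβ
    omega
  rw [← sub_eq_zero, sub_neg_eq_add, ← selfLoop_apply_removeNth f β p j hp hq]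
  exact hf p j γ hγ

lemma apply_eq_zero_of_forall_selfLoop_eq_zero {α : Fin (m + 2) → Bool}
    (hα : wt0 α = wt1 α + k) {p q r : Fin (m + 2)} (hpq : p ≠ q) (hpr : p ≠ r) (hqr : q ≠ r)
    (hp : α p = true) (hq : α q = false) (hr : α r = false) : f α = 0 := by
  have hα' : wt0 (α ∘ swap p q) = wt1 (α ∘ swap p q) + k := by
    rwa [wt0_comp_perm, wt1_comp_perm]
  have hcycle : (α ∘ swap p q) ∘ swap q r = α ∘ swap p r := by
    ext x
    simp only [Function.comp_apply, swap_apply_def]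
    split_ifs <;> simp_all
  have h₁ := apply_comp_swap_eq_neg hf hα hpq hp hq
  have h₂ := apply_comp_swap_eq_neg hf hα' hqr (by simp [hp])
    (by simp [swap_apply_of_ne_of_ne hpr.symm hqr.symm, hr])
  have h₃ := apply_comp_swap_eq_neg hf hα hpr hp hr
  rw [hcycle, h₃, h₁] at h₂
  linear_combination -h₂ / 2

end Antisymmetry

lemma LoopReach.trans {a b c : ℕ} {f : (Fin a → Bool) → ℂ} {g : (Fin b → Bool) → ℂ}
    {h : (Fin c → Bool) → ℂ} (hfg : LoopReach a f b g) (hgh : LoopReach b g c h) :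
    LoopReach a f c h := by
  induction hgh with
  | refl => exact hfg
  | step _ i j ih => exact ih.step i j

theorem exists_loopReach_apply_false_ne_zero {k : ℕ} (hk : 0 < k) {n : ℕ}
    (f : (Fin n → Bool) → ℂ) (α : Fin n → Bool) (hα : wt0 α = wt1 α + k) (hfα : f α ≠ 0) :
    ∃ g : (Fin k → Bool) → ℂ, LoopReach n f k g ∧ g (fun _ => false) ≠ 0 := by
  induction n using Nat.strong_induction_on with
  | _ n ih =>
  have hn := wt0_add_wt1 α
  obtain hα₁ | hα₁ := Nat.eq_zero_or_pos (wt1 α)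
  · obtain rfl : n = k := by omega
    rw [wt1_eq_zero_iff.1 hα₁] at hfα
    exact ⟨f, .refl _ _, hfα⟩
  obtain ⟨m, rfl⟩ : ∃ m, n = m + 2 := ⟨n - 2, by omega⟩
  by_cases hloop : ∃ i j γ, wt0 γ = wt1 γ + k ∧ selfLoop f i j γ ≠ 0
  · obtain ⟨i, j, γ, hγ, hγf⟩ := hloop
    obtain ⟨g, hg, hg0⟩ := ih m (by omega) (selfLoop f i j) γ hγ hγf
    exact ⟨g, (LoopReach.step (.refl _ f) i j).trans hg, hg0⟩
  push Not at hloop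
  obtain ⟨p, hp⟩ := Finset.card_pos.1 hα₁
  -- `k > 0` provides the second `0`
  obtain ⟨q, hq, r, hr, hqr⟩ := Finset.one_lt_card.1 (show 1 < wt0 α by omega)
  simp only [Finset.mem_filter, Finset.mem_univ, true_and] at hp hq hr
  refine absurd (apply_eq_zero_of_forall_selfLoop_eq_zero hloop hα ?_ ?_ hqr hp hq hr) hfα
  · exact ne_of_apply_ne α (by rw [hp, hq]; decide)
  · exact ne_of_apply_ne α (by rw [hp, hr]; decide)

def flipInputs {n : ℕ} (f : (Fin n → Bool) → ℂ) : (Fin n → Bool) → ℂ := fun x => f (not ∘ x)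

@[simp]
lemma flipInputs_flipInputs {n : ℕ} (f : (Fin n → Bool) → ℂ) : flipInputs (flipInputs f) = f := by
  ext x
  simp [flipInputs, Function.comp_def]

lemma selfLoop_flipInputs {n : ℕ} (f : (Fin (n + 2) → Bool) → ℂ) (i : Fin (n + 2))
    (j : Fin (n + 1)) : selfLoop (flipInputs f) i j = flipInputs (selfLoop f i j) := by
  ext x
  simp only [selfLoop, flipInputs, Fin.comp_insertNth, Bool.not_false, Bool.not_true]
  exact add_comm _ _

lemma LoopReach.flipInputs {n m : ℕ} {f : (Fin n → Bool) → ℂ} {g : (Fin m → Bool) → ℂ}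
    (h : LoopReach n f m g) : LoopReach n (flipInputs f) m (flipInputs g) := by
  induction h with
  | refl => exact .refl _ _
  | step _ i j ih => exact selfLoop_flipInputs _ i j ▸ ih.step i j

/-- if `α ∈ supp(f)` and `#0(α) − #1(α) = k > 0`, then a sequence
of `≠₂`-self-loops applied to `f` yields an arity-`k` signature `g` with
`g(0^k) ≠ 0`; symmetrically, if `#1(α) − #0(α) = k > 0`, then such a sequence
yields an arity-`k` signature `g` with `g(1^k) ≠ 0`. -/
theorem stmt3 {n : ℕ} (f : (Fin n → Bool) → ℂ) (α : Fin n → Bool) (hα : f α ≠ 0)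
    (k : ℕ) (hk : 0 < k) :
    (wt0 α = wt1 α + k →
      ∃ g : (Fin k → Bool) → ℂ, LoopReach n f k g ∧ g (fun _ => false) ≠ 0) ∧
    (wt1 α = wt0 α + k →
      ∃ g : (Fin k → Bool) → ℂ, LoopReach n f k g ∧ g (fun _ => true) ≠ 0) := by
  refine ⟨(exists_loopReach_apply_false_ne_zero hk f α · hα), fun hα₁ => ?_⟩
  obtain ⟨g, hg, hg0⟩ := exists_loopReach_apply_false_ne_zero hk (flipInputs f) (not ∘ α)
    (by simpa using hα₁) (by simpa [flipInputs, Function.comp_def] using hα)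
  refine ⟨flipInputs g, by simpa using hg.flipInputs, ?_⟩
  simpa [flipInputs, Function.comp_def] using hg0
end

section
/- Let K = (1/√2)·[[1, 1],[i, −i]] ∈ M₂(ℂ), and let X = [[0,1],[1,0]]. For every complex orthogonal 2×2 matrix O (i.e., Oᵀ·O = I), there exists an invertible diagonal matrix D ∈ M₂(ℂ) such that O·K = K·D or O·K = K·X·D. Equivalently, K⁻¹·O·K is either a diagonal or an anti-diagonal invertible matrix. -/
/-!
A complex orthogonal `2 × 2` matrix is a rotation `[[a, -b], [b, a]]` or a reflection
`[[a, b], [b, -a]]` with `a² + b² = 1`. The columns `(1, i)/√2` and `(1, -i)/√2` of `K` are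
eigenvectors of every rotation, with eigenvalues `a ∓ bi`, and every reflection swaps them up to
the factors `a ± bi`. These factors are invertible because `(a - bi)(a + bi) = a² + b² = 1`.
-/

open Matrix

/-- The matrix `K = (1/√2)·[[1, 1],[i, −i]]`. -/
noncomputable def Kmat : Matrix (Fin 2) (Fin 2) ℂ :=
  ((Real.sqrt 2 : ℂ))⁻¹ • !![1, 1; Complex.I, -Complex.I]

theorem Matrix.exists_eq_rotation_or_reflection_of_transpose_mul_self {R : Type*} [CommRing R]
    [IsDomain R] {O : Matrix (Fin 2) (Fin 2) R} (hO : Oᵀ * O = 1) :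
    ∃ a b : R, a ^ 2 + b ^ 2 = 1 ∧ (O = !![a, -b; b, a] ∨ O = !![a, b; b, -a]) := by
  have hdet : O.det * O.det = 1 := by simpa [det_transpose] using congrArg det hO
  rw [det_fin_two] at hdet
  have e00 : O 0 0 * O 0 0 + O 1 0 * O 1 0 = 1 := by
    simpa [mul_apply, Fin.sum_univ_two] using congrFun (congrFun hO 0) 0
  have e01 : O 0 0 * O 0 1 + O 1 0 * O 1 1 = 0 := by
    simpa [mul_apply, Fin.sum_univ_two] using congrFun (congrFun hO 0) 1
  refine ⟨O 0 0, O 1 0, by linear_combination e00, ?_⟩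
  rcases mul_self_eq_one_iff.mp hdet with h | h
  · have hb : O 0 1 = -O 1 0 := by linear_combination O 0 0 * e01 - O 1 0 * h - O 0 1 * e00
    have hd : O 1 1 = O 0 0 := by linear_combination O 1 0 * e01 + O 0 0 * h - O 1 1 * e00
    left
    ext i j; fin_cases i <;> fin_cases j <;> simp [hb, hd]
  · have hb : O 0 1 = O 1 0 := by linear_combination O 0 0 * e01 - O 1 0 * h - O 0 1 * e00
    have hd : O 1 1 = -O 0 0 := by linear_combination O 1 0 * e01 + O 0 0 * h - O 1 1 * e00
    right
    ext i j; fin_cases i <;> fin_cases j <;> simp [hb, hd]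

theorem rotation_mul_Kmat (a b : ℂ) :
    !![a, -b; b, a] * Kmat = Kmat * !![a - b * Complex.I, 0; 0, a + b * Complex.I] := by
  unfold Kmat
  rw [Matrix.mul_smul, Matrix.smul_mul]
  congr 1
  ext i j
  fin_cases i <;> fin_cases j <;> simp [mul_apply, Fin.sum_univ_two] <;> ring_nf <;>
    simp [Complex.I_sq]

theorem reflection_mul_Kmat (a b : ℂ) :
    !![a, b; b, -a] * Kmat =
      Kmat * !![(0 : ℂ), 1; 1, 0] * !![a + b * Complex.I, 0; 0, a - b * Complex.I] := by
  unfold Kmat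
  rw [Matrix.mul_smul, Matrix.smul_mul, Matrix.smul_mul]
  congr 1
  ext i j
  fin_cases i <;> fin_cases j <;> simp [mul_apply, Fin.sum_univ_two] <;> ring_nf <;>
    simp [Complex.I_sq]

/-- for every complex orthogonal 2×2 matrix `O` (`Oᵀ·O = 1`)
there is an invertible diagonal matrix `D = [[d₁,0],[0,d₂]]` with
`O·K = K·D` or `O·K = K·X·D`, where `X = [[0,1],[1,0]]`. -/
theorem stmt6 (O : Matrix (Fin 2) (Fin 2) ℂ) (hO : Oᵀ * O = 1) :
    ∃ d₁ d₂ : ℂ, d₁ ≠ 0 ∧ d₂ ≠ 0 ∧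
      (O * Kmat = Kmat * !![d₁, 0; 0, d₂] ∨
        O * Kmat = Kmat * !![(0 : ℂ), 1; 1, 0] * !![d₁, 0; 0, d₂]) := by
  obtain ⟨a, b, hab, hrot | hrefl⟩ := exists_eq_rotation_or_reflection_of_transpose_mul_self hO
  all_goals
    have hunit : (a - b * Complex.I) * (a + b * Complex.I) = 1 := by
      linear_combination hab - b ^ 2 * Complex.I_sq
  · exact ⟨_, _, left_ne_zero_of_mul_eq_one hunit, right_ne_zero_of_mul_eq_one hunit,
      Or.inl (hrot ▸ rotation_mul_Kmat a b)⟩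
  · exact ⟨_, _, right_ne_zero_of_mul_eq_one hunit, left_ne_zero_of_mul_eq_one hunit,
      Or.inr (hrefl ▸ reflection_mul_Kmat a b)⟩
end

section
/- Let f be a signature of arity k ≥ 3 and let α, β ∈ supp(f) be such that at least one of α, β is not in {0^k, 1^k} (the all-zero and all-one strings). Then there exists a signature f′ of arity k−1 or k−2, obtained from f by one of the following single operations: pinning one variable to a constant, pinning two variables to constants, or applying one ≠₂-self-loop, together with strings α′, β′ ∈ supp(f′) satisfying #1(α′) − #1(β′) = #1(α) − #1(β). -/
/-- Pinning the `i`-th variable of `f` to the constant `c`. -/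
noncomputable def pinSig {n : ℕ} (f : (Fin (n + 1) → Bool) → ℂ) (i : Fin (n + 1)) (c : Bool) :
    (Fin n → Bool) → ℂ :=
  fun x => f (i.insertNth c x)

/-! If `α` and `β` agree in some position, pinning that position to the common value keeps both
strings in the support and preserves the weight difference. Otherwise `β` is the complement of
`α`, and since one of them is not constant there are positions `i`, `j` with `αᵢ = 1, αⱼ = 0`
and `βᵢ = 0, βⱼ = 1`. Let `α̃, β̃` be `α, β` with the values at `i` and `j` swapped. If
`f(α̃) ≠ 0` (resp. `f(β̃) ≠ 0`), then `α̃, β` (resp. `α, β̃`) agree at `i` and have the same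
weights as `α, β`, so pinning `i` works. If `f(α̃) = f(β̃) = 0`, the `≠₂`-self-loop at `(i, j)`
takes the value `f(α)` resp. `f(β)` on the restrictions of `α` and `β` to the other positions. -/

section

variable {n : ℕ}

lemma wt1_insertNth_s9 (i : Fin (n + 1)) (c : Bool) (x : Fin n → Bool) :
    wt1 (i.insertNth c x) = c.toNat + wt1 x := by
  unfold wt1
  rw [Finset.card_filter, Finset.card_filter, Fin.sum_univ_succAbove _ i]
  cases c <;> simp

lemma wt1_eq_toNat_add_wt1_removeNth (i : Fin (n + 1)) (x : Fin (n + 1) → Bool) :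
    wt1 x = (x i).toNat + wt1 (i.removeNth x) := by
  conv_lhs => rw [← Fin.insertNth_self_removeNth i x]
  exact wt1_insertNth_s9 i (x i) _

lemma insertNth_insertNth_removeNth_removeNth {α : Type*} (i : Fin (n + 2)) (j : Fin (n + 1))
    (x : Fin (n + 2) → α) :
    i.insertNth (x i) (j.insertNth (x (i.succAbove j)) (j.removeNth (i.removeNth x))) = x := by
  rw [← Fin.removeNth_apply i x j, Fin.insertNth_self_removeNth, Fin.insertNth_self_removeNth]

lemma pinSig_removeNth (f : (Fin (n + 1) → Bool) → ℂ) (i : Fin (n + 1)) (x : Fin (n + 1) → Bool) :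
    pinSig f i (x i) (i.removeNth x) = f x :=
  congrArg f (Fin.insertNth_self_removeNth i x)

lemma exists_pinSig_of_apply_eq (f : (Fin (n + 1) → Bool) → ℂ) {α β : Fin (n + 1) → Bool}
    {i : Fin (n + 1)} (h : α i = β i) (hα : f α ≠ 0) (hβ : f β ≠ 0) :
    ∃ (c : Bool) (α' β' : Fin n → Bool), pinSig f i c α' ≠ 0 ∧ pinSig f i c β' ≠ 0 ∧
      (wt1 α' : ℤ) - wt1 β' = (wt1 α : ℤ) - wt1 β := by
  refine ⟨α i, i.removeNth α, i.removeNth β, ?_, ?_, ?_⟩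
  · rwa [pinSig_removeNth]
  · rwa [h, pinSig_removeNth]
  · rw [wt1_eq_toNat_add_wt1_removeNth i α, wt1_eq_toNat_add_wt1_removeNth i β, h]
    push_cast
    ring

lemma exists_pinSig_or_selfLoop (f : (Fin (n + 2) → Bool) → ℂ) (i : Fin (n + 2))
    (j : Fin (n + 1)) {a b : Fin n → Bool}
    (ha : f (i.insertNth true (j.insertNth false a)) ≠ 0)
    (hb : f (i.insertNth false (j.insertNth true b)) ≠ 0) :
    (∃ (c : Bool) (α' β' : Fin (n + 1) → Bool), pinSig f i c α' ≠ 0 ∧ pinSig f i c β' ≠ 0 ∧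
      (wt1 α' : ℤ) - wt1 β' = (wt1 a : ℤ) - wt1 b) ∨
    (selfLoop f i j a ≠ 0 ∧ selfLoop f i j b ≠ 0) := by
  have hwt (c : Bool) :
      (wt1 (j.insertNth c a) : ℤ) - wt1 (j.insertNth c b) = (wt1 a : ℤ) - wt1 b := by
    simp only [wt1_insertNth_s9]
    push_cast
    ring
  by_cases ha' : f (i.insertNth false (j.insertNth true a)) = 0
  · by_cases hb' : f (i.insertNth true (j.insertNth false b)) = 0
    · right
      constructor
      · rwa [selfLoop, ha', zero_add]
      · rwa [selfLoop, hb', add_zero]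
    · exact Or.inl ⟨true, j.insertNth false a, j.insertNth false b, ha, hb', hwt false⟩
  · exact Or.inl ⟨false, j.insertNth true a, j.insertNth true b, ha', hb, hwt true⟩

end

lemma exists_apply_eq_true_and_false {ι : Type*} {x : ι → Bool} (h₀ : x ≠ fun _ => false)
    (h₁ : x ≠ fun _ => true) : (∃ i, x i = true) ∧ ∃ j, x j = false := by
  obtain ⟨i, hi⟩ := Function.ne_iff.mp h₀
  obtain ⟨j, hj⟩ := Function.ne_iff.mp h₁
  exact ⟨⟨i, by simpa using hi⟩, ⟨j, by simpa using hj⟩⟩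

/-- let `f` have arity `k = m + 3 ≥ 3`, let `α, β ∈ supp(f)`, and
suppose at least one of `α, β` is not the all-zero or all-one string. Then a
single operation — pinning one variable, pinning two variables, or one
`≠₂`-self-loop — yields a signature `f'` (of arity `k−1` or `k−2`) with
strings `α', β' ∈ supp(f')` such that `#1(α') − #1(β') = #1(α) − #1(β)`. -/
theorem stmt9 {m : ℕ} (f : (Fin (m + 3) → Bool) → ℂ) (α β : Fin (m + 3) → Bool)
    (hα : f α ≠ 0) (hβ : f β ≠ 0)
    (hne : ((α ≠ fun _ => false) ∧ (α ≠ fun _ => true)) ∨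
      ((β ≠ fun _ => false) ∧ (β ≠ fun _ => true))) :
    (∃ (i : Fin (m + 3)) (c : Bool) (α' β' : Fin (m + 2) → Bool),
        pinSig f i c α' ≠ 0 ∧ pinSig f i c β' ≠ 0 ∧
        (wt1 α' : ℤ) - wt1 β' = (wt1 α : ℤ) - wt1 β) ∨
    (∃ (i : Fin (m + 3)) (c : Bool) (i' : Fin (m + 2)) (c' : Bool)
        (α' β' : Fin (m + 1) → Bool),
        pinSig (pinSig f i c) i' c' α' ≠ 0 ∧ pinSig (pinSig f i c) i' c' β' ≠ 0 ∧
        (wt1 α' : ℤ) - wt1 β' = (wt1 α : ℤ) - wt1 β) ∨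
    (∃ (i : Fin (m + 3)) (j : Fin (m + 2)) (α' β' : Fin (m + 1) → Bool),
        selfLoop f i j α' ≠ 0 ∧ selfLoop f i j β' ≠ 0 ∧
        (wt1 α' : ℤ) - wt1 β' = (wt1 α : ℤ) - wt1 β) := by
  by_cases hagree : ∃ i, α i = β i
  · obtain ⟨i, hi⟩ := hagree
    exact Or.inl ⟨i, exists_pinSig_of_apply_eq f hi hα hβ⟩
  have hβα : ∀ k, β k = !α k := fun k => Bool.eq_not_iff.mpr fun h => hagree ⟨k, h.symm⟩
  obtain ⟨i, j', hi, hj'⟩ : ∃ i j, α i = true ∧ α j = false := by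
    rcases hne with ⟨h₀, h₁⟩ | ⟨h₀, h₁⟩
    · obtain ⟨⟨i, hi⟩, ⟨j, hj⟩⟩ := exists_apply_eq_true_and_false h₀ h₁
      exact ⟨i, j, hi, hj⟩
    · obtain ⟨⟨j, hj⟩, ⟨i, hi⟩⟩ := exists_apply_eq_true_and_false h₀ h₁
      exact ⟨i, j, by simpa [hβα] using hi, by simpa [hβα] using hj⟩
  obtain ⟨j, rfl⟩ := Fin.exists_succAbove_eq (ne_of_apply_ne α (by simp [hi, hj']) : j' ≠ i)
  obtain ⟨a, rfl⟩ : ∃ a, i.insertNth true (j.insertNth false a) = α :=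
    ⟨_, by simpa only [hi, hj'] using insertNth_insertNth_removeNth_removeNth i j α⟩
  obtain ⟨b, rfl⟩ : ∃ b, i.insertNth false (j.insertNth true b) = β :=
    ⟨_, by simpa only [hβα, Fin.insertNth_apply_same, Fin.insertNth_apply_succAbove,
      Bool.not_true, Bool.not_false] using insertNth_insertNth_removeNth_removeNth i j β⟩
  have hwt : (wt1 a : ℤ) - wt1 b = (wt1 (i.insertNth true (j.insertNth false a)) : ℤ) -
      wt1 (i.insertNth false (j.insertNth true b)) := by
    simp only [wt1_insertNth_s9]
    push_cast
    ring
  rcases exists_pinSig_or_selfLoop f i j hα hβ with ⟨c, α', β', hpin⟩ | ⟨hloopα, hloopβ⟩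
  · exact Or.inl ⟨i, c, α', β', hwt ▸ hpin⟩
  · exact Or.inr (Or.inr ⟨i, j, a, b, hloopα, hloopβ, hwt⟩)
end

section
/- For every integer k ≥ −1, the symmetric signature h_k of arity k+2, defined by h_k(α) = −k if #1(α) = 0, h_k(α) = 1 if #1(α) = 1, and h_k(α) = 0 if #1(α) ≥ 2, satisfies the identity h_k = 2·Δ₀^{⊗(k+2)} + Σ_{i=1}^{k+2} Δ₀^{⊗(i−1)} ⊗ u ⊗ Δ₀^{⊗(k+2−i)}, where u is the unary signature with u(0) = −1 and u(1) = 1 (placed at the i-th variable in the i-th summand) and the sum is taken pointwise. -/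
/-- The unary signature `Δ₀ = [1,0]`, as a function of a single Boolean value. -/
noncomputable def d0 : Bool → ℂ := fun b => if b then 0 else 1

/-- The unary signature `u = [-1,1]`, as a function of a single Boolean value. -/
noncomputable def uSig : Bool → ℂ := fun b => if b then 1 else -1

/-! Writing `u = Δ₁ - Δ₀`, where `Δ₁ = [0,1]`, and using `Δ₀(x_i) · ∏_{j ≠ i} Δ₀(x_j) = ∏_j Δ₀(x_j)`,
the sum of the `n = k + 2` terms is the indicator of weight one minus `n` times the indicator of
weight zero. Adding `2 ∏_j Δ₀(x_j)` leaves `2 - n = -k` at weight zero. -/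

open Finset

theorem prod_d0_eq_ite {ι : Type*} (s : Finset ι) (x : ι → Bool) :
    ∏ j ∈ s, d0 (x j) = if ∀ j ∈ s, x j = false then 1 else 0 := by
  rw [← prod_boole]
  exact prod_congr rfl fun j _ => by cases x j <;> rfl

theorem uSig_eq_sub_d0 (b : Bool) : uSig b = (if b then 1 else 0) - d0 b := by
  cases b <;> simp [uSig, d0]

section Weight

variable {n : ℕ} (x : Fin n → Bool)

theorem wt1_eq_zero_iff_s11 : wt1 x = 0 ↔ ∀ i, x i = false := by
  simp [wt1, filter_eq_empty_iff]

theorem prod_d0_eq_ite_wt1 : ∏ j, d0 (x j) = if wt1 x = 0 then 1 else 0 := by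
  simp only [prod_d0_eq_ite, mem_univ, true_implies, wt1_eq_zero_iff_s11]

theorem ite_mul_prod_erase_d0 (i : Fin n) :
    (if x i then 1 else 0) * ∏ j ∈ univ.erase i, d0 (x j) =
      if univ.filter (fun j => x j = true) = {i} then 1 else 0 := by
  rw [prod_d0_eq_ite, boole_mul, ← ite_and]
  congr 1
  rw [eq_singleton_iff_unique_mem]
  apply propext
  simp only [mem_filter, mem_univ, true_and, mem_erase, ne_eq, and_true]
  refine and_congr_right fun _ => forall_congr' fun j => ?_
  cases x j <;> tauto

theorem sum_ite_mul_prod_erase_d0 :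
    ∑ i, (if x i then 1 else 0) * ∏ j ∈ univ.erase i, d0 (x j) =
      if wt1 x = 1 then 1 else 0 := by
  simp_rw [ite_mul_prod_erase_d0]
  split_ifs with h
  · obtain ⟨a, ha⟩ := card_eq_one.mp h
    simp only [ha, singleton_inj, Fintype.sum_ite_eq]
  · refine sum_eq_zero fun i _ => if_neg fun hi => h ?_
    simp [wt1, hi]

theorem sum_uSig_mul_prod_erase_d0 :
    ∑ i, uSig (x i) * ∏ j ∈ univ.erase i, d0 (x j) =
      (if wt1 x = 1 then 1 else 0) - n * if wt1 x = 0 then 1 else 0 := by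
  simp_rw [uSig_eq_sub_d0, sub_mul, sum_sub_distrib, sum_ite_mul_prod_erase_d0]
  simp_rw [mul_prod_erase univ (fun j => d0 (x j)) (mem_univ _)]
  rw [sum_const, card_univ, Fintype.card_fin, nsmul_eq_mul, prod_d0_eq_ite_wt1]

end Weight

/-- for every integer `k ≥ −1`, the symmetric arity-`(k+2)`
signature `h_k` (value `−k` at Hamming weight `0`, value `1` at weight `1`,
value `0` at weight `≥ 2`) satisfies, pointwise,
`h_k = 2·Δ₀^{⊗(k+2)} + Σ_{i=1}^{k+2} Δ₀^{⊗(i−1)} ⊗ u ⊗ Δ₀^{⊗(k+2−i)}`,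
where `u = [−1,1]` is placed at the `i`-th variable in the `i`-th summand. -/
theorem stmt11 (k : ℤ) (hk : -1 ≤ k) (x : Fin (k + 2).toNat → Bool) :
    (if wt1 x = 0 then (-k : ℂ) else if wt1 x = 1 then 1 else 0) =
      2 * (∏ j, d0 (x j)) +
        ∑ i, uSig (x i) * ∏ j ∈ Finset.univ.erase i, d0 (x j) := by
  have hn : (((k + 2).toNat : ℕ) : ℂ) = k + 2 := by
    rw [← Int.cast_natCast, Int.toNat_of_nonneg (by omega)]
    push_cast; rfl
  rw [prod_d0_eq_ite_wt1, sum_uSig_mul_prod_erase_d0, hn]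
  split_ifs <;> first | omega | ring
end
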